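/- arXiv:1508.04390 — 9 statements merged into one kernel-verified Lean document; each statement's English description precedes it below -/
import Mathlib

section
/- Let G = (V, E) be a finite simple graph in which every vertex u carries a weight w_u > 0, and set W_u := Σ_{v∈N(u)∪{u}} w_v. Then Σ_{v∈V} w_v / W_v ≤ α(G), where α(G) is the independence number of G. -/
open Finset

/-! Greedy argument (Caro–Wei, weighted): pick a vertex `u` whose closed neighbourhood `N[u]`
has least weight, put it into the independent set and delete `N[u]`. The terms
`w v / W_v` with `v ∈ N[u]` add up to at most `∑_{v ∈ N[u]} w v / W_u = 1`, while deleting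
vertices only shrinks the closed-neighbourhood weights of the survivors, so their terms grow. -/

/-- The independence number of a finite simple graph: the largest cardinality of a set of
pairwise non-adjacent vertices. -/
noncomputable def indepNum {V : Type*} [Fintype V] (G : SimpleGraph V) : ℕ :=
  sSup {n | ∃ s : Finset V, (∀ a ∈ s, ∀ b ∈ s, a ≠ b → ¬ G.Adj a b) ∧ s.card = n}

lemma card_le_indepNum {V : Type*} [Fintype V] {G : SimpleGraph V} {t : Finset V}
    (ht : G.IsIndepSet t) : t.card ≤ indepNum G :=
  le_csSup ⟨Fintype.card V, by rintro n ⟨s, -, rfl⟩; exact s.card_le_univ⟩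
    ⟨t, fun _ ha _ hb hab ↦ ht ha hb hab, rfl⟩

section CaroWei

variable {V : Type*} [Fintype V] [DecidableEq V] (G : SimpleGraph V) [DecidableRel G.Adj]

/-- The paper's `W_v`, computed in the subgraph induced on `s ∪ {v}`. -/
def closedNbhdWeight (w : V → ℝ) (s : Finset V) (v : V) : ℝ :=
  ∑ x ∈ insert v (G.neighborFinset v ∩ s), w x

variable {G} {w : V → ℝ}

lemma closedNbhdWeight_pos (hw : ∀ v, 0 < w v) (s : Finset V) (v : V) :
    0 < closedNbhdWeight G w s v :=
  sum_pos (fun x _ ↦ hw x) (insert_nonempty _ _)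

lemma closedNbhdWeight_mono (hw : ∀ v, 0 ≤ w v) {s t : Finset V} (hst : s ⊆ t) (v : V) :
    closedNbhdWeight G w s v ≤ closedNbhdWeight G w t v :=
  sum_le_sum_of_subset_of_nonneg (insert_subset_insert _ (inter_subset_inter_left hst))
    fun x _ _ ↦ hw x

lemma sum_div_closedNbhdWeight_le_one_of_isMinOn (hw : ∀ v, 0 < w v) {s : Finset V} {u : V}
    (hu : u ∈ s) (hmin : IsMinOn (closedNbhdWeight G w s) s u) :
    ∑ v ∈ insert u (G.neighborFinset u ∩ s), w v / closedNbhdWeight G w s v ≤ 1 :=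
  calc ∑ v ∈ insert u (G.neighborFinset u ∩ s), w v / closedNbhdWeight G w s v
      ≤ ∑ v ∈ insert u (G.neighborFinset u ∩ s), w v / closedNbhdWeight G w s u := by
        refine sum_le_sum fun v hv ↦ div_le_div_of_nonneg_left (hw v).le
          (closedNbhdWeight_pos hw s u) (hmin (mem_coe.2 ?_))
        exact insert_subset hu inter_subset_right hv
    _ = 1 := by
        rw [← sum_div]
        exact div_self (closedNbhdWeight_pos hw s u).ne'

lemma isIndepSet_insert_of_subset_sdiff {s t : Finset V} {u : V} (ht : G.IsIndepSet t)
    (hts : t ⊆ s \ insert u (G.neighborFinset u ∩ s)) :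
    G.IsIndepSet (insert u t : Finset V) := by
  have hnadj : ∀ b ∈ t, ¬ G.Adj u b := fun b hb hub ↦ by
    obtain ⟨hbs, hbN⟩ := mem_sdiff.1 (hts hb)
    exact hbN (mem_insert_of_mem (mem_inter.2 ⟨(G.mem_neighborFinset u b).2 hub, hbs⟩))
  rw [coe_insert, SimpleGraph.IsIndepSet, Set.pairwise_insert]
  exact ⟨ht, fun b hb _ ↦ ⟨hnadj b hb, fun hbu ↦ hnadj b hb hbu.symm⟩⟩

theorem exists_isIndepSet_sum_div_closedNbhdWeight_le_card (hw : ∀ v, 0 < w v)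
    (s : Finset V) : ∃ t ⊆ s, G.IsIndepSet t ∧
      ∑ v ∈ s, w v / closedNbhdWeight G w s v ≤ t.card := by
  induction s using strongInduction with
  | _ s ih =>
  obtain rfl | hne := s.eq_empty_or_nonempty
  · exact ⟨∅, subset_rfl, by simp⟩
  obtain ⟨u, hu, hmin⟩ := s.exists_min_image (closedNbhdWeight G w s) hne
  set N := insert u (G.neighborFinset u ∩ s)
  have hNs : N ⊆ s := insert_subset hu inter_subset_right
  obtain ⟨t, hts, ht, hsum⟩ := ih (s \ N) (sdiff_ssubset hNs (insert_nonempty _ _))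
  have hut : u ∉ t := fun h ↦ (mem_sdiff.1 (hts h)).2 (mem_insert_self u _)
  refine ⟨insert u t, insert_subset hu (hts.trans sdiff_subset),
    isIndepSet_insert_of_subset_sdiff ht hts, ?_⟩
  have hrest : ∑ v ∈ s \ N, w v / closedNbhdWeight G w s v
      ≤ ∑ v ∈ s \ N, w v / closedNbhdWeight G w (s \ N) v :=
    sum_le_sum fun v _ ↦ div_le_div_of_nonneg_left (hw v).le (closedNbhdWeight_pos hw _ v)
      (closedNbhdWeight_mono (fun x ↦ (hw x).le) sdiff_subset v)
  calc ∑ v ∈ s, w v / closedNbhdWeight G w s v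
      = ∑ v ∈ s \ N, w v / closedNbhdWeight G w s v
        + ∑ v ∈ N, w v / closedNbhdWeight G w s v := (sum_sdiff hNs).symm
    _ ≤ t.card + 1 :=
        add_le_add (hrest.trans hsum) (sum_div_closedNbhdWeight_le_one_of_isMinOn hw hu (isMinOn_iff.2 hmin))
    _ = (insert u t).card := by rw [card_insert_of_notMem hut, Nat.cast_succ]

end CaroWei

/-- Weighted Turán-type bound: for positive vertex weights `w`, with
`W_u = ∑_{v ∈ N(u) ∪ {u}} w v`, we have `∑_v w v / W_v ≤ α(G)`. -/
theorem stmt_0 {V : Type*} [Fintype V] [DecidableEq V] (G : SimpleGraph V)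
    [DecidableRel G.Adj] (w : V → ℝ) (hw : ∀ v, 0 < w v) :
    ∑ v, w v / (∑ x ∈ insert v (G.neighborFinset v), w x) ≤ (indepNum G : ℝ) := by
  obtain ⟨t, -, ht, hsum⟩ := exists_isIndepSet_sum_div_closedNbhdWeight_le_card (G := G) hw univ
  simp only [closedNbhdWeight, inter_univ] at hsum
  exact hsum.trans (by exact_mod_cast card_le_indepNum ht)
end

section
/- Let G = (V, E) be a finite simple graph in which every vertex u carries a weight w_u > 0, set W := Σ_{v∈V} w_v and W_u := Σ_{v∈N(u)∪{u}} w_v. Then Σ_{v∈V} w_v · W_v ≥ W² / α(G), where α(G) is the independence number of G. -/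
open Finset

section
variable {V : Type*} [Fintype V] [DecidableEq V] (G : SimpleGraph V) [DecidableRel G.Adj]
  (w : V → ℝ)

noncomputable def Ws (s : Finset V) (v : V) : ℝ :=
  ∑ x ∈ (insert v (G.neighborFinset v)) ∩ s, w x

def Amax (s : Finset V) : ℕ :=
  (s.powerset.filter (fun t => ∀ a ∈ t, ∀ b ∈ t, a ≠ b → ¬ G.Adj a b)).sup Finset.card

lemma Ws_pos (hw : ∀ v, 0 < w v) {s : Finset V} {v : V} (hv : v ∈ s) : 0 < Ws G w s v := by
  apply Finset.sum_pos (fun x _ => hw x)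
  exact ⟨v, by simp [hv]⟩

lemma caro_wei (hw : ∀ v, 0 < w v) : ∀ s : Finset V,
    ∑ v ∈ s, w v / Ws G w s v ≤ (Amax G s : ℝ) := by
  intro s
  induction s using Finset.strongInduction with
  | _ s ih =>
    rcases s.eq_empty_or_nonempty with rfl | hne
    · simp
    obtain ⟨u, hu, hmin⟩ := s.exists_min_image (Ws G w s) hne
    set t := (insert u (G.neighborFinset u)) ∩ s with ht
    have hts : t ⊆ s := inter_subset_right
    set s' := s \ t with hs'
    have hsub : s' ⊂ s := by
      refine Finset.ssubset_iff_of_subset (sdiff_subset) |>.2 ⟨u, hu, by simp [hs', ht, hu]⟩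
    have hsplit : ∑ v ∈ s', w v / Ws G w s v + ∑ v ∈ t, w v / Ws G w s v
        = ∑ v ∈ s, w v / Ws G w s v := Finset.sum_sdiff hts
    have h1 : ∑ v ∈ t, w v / Ws G w s v ≤ 1 := by
      have : ∑ v ∈ t, w v / Ws G w s v ≤ ∑ v ∈ t, w v / Ws G w s u := by
        refine Finset.sum_le_sum fun v hv => ?_
        exact div_le_div_of_nonneg_left (hw v).le (Ws_pos G w hw hu) (hmin v (hts hv))
      calc _ ≤ ∑ v ∈ t, w v / Ws G w s u := this
        _ = (∑ v ∈ t, w v) / Ws G w s u := by rw [Finset.sum_div]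
        _ = Ws G w s u / Ws G w s u := rfl
        _ = 1 := div_self (Ws_pos G w hw hu).ne'
    have h2 : ∑ v ∈ s', w v / Ws G w s v ≤ (Amax G s' : ℝ) := by
      refine le_trans (Finset.sum_le_sum fun v hv => ?_) (ih s' hsub)
      have hWle : Ws G w s' v ≤ Ws G w s v := by
        apply Finset.sum_le_sum_of_subset_of_nonneg
        · exact Finset.inter_subset_inter le_rfl sdiff_subset
        · intro x _ _; exact (hw x).le
      exact div_le_div_of_nonneg_left (hw v).le (Ws_pos G w hw hv) hWle
    -- Amax s' + 1 ≤ Amax s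
    have h3 : Amax G s' + 1 ≤ Amax G s := by
      have hne' : (s'.powerset.filter
          (fun t => ∀ a ∈ t, ∀ b ∈ t, a ≠ b → ¬ G.Adj a b)).Nonempty :=
        ⟨∅, by simp⟩
      obtain ⟨t', ht', hmax⟩ := Finset.exists_mem_eq_sup _ hne' Finset.card
      simp only [Finset.mem_filter, Finset.mem_powerset] at ht'
      have hus' : u ∉ s' := by simp [hs', ht, hu]
      have hut' : u ∉ t' := fun h => hus' (ht'.1 h)
      have hins : insert u t' ∈ s.powerset.filter
          (fun t => ∀ a ∈ t, ∀ b ∈ t, a ≠ b → ¬ G.Adj a b) := by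
        simp only [Finset.mem_filter, Finset.mem_powerset]
        constructor
        · intro x hx
          rcases Finset.mem_insert.1 hx with rfl | hx
          · exact hu
          · exact sdiff_subset (ht'.1 hx)
        · intro a ha b hb hab
          have key : ∀ c ∈ t', ¬ G.Adj u c := by
            intro c hc hadj
            have hcs' : c ∈ s' := ht'.1 hc
            have : c ∈ t := by
              rw [ht]
              exact Finset.mem_inter.2 ⟨Finset.mem_insert.2 (Or.inr (by
                rw [SimpleGraph.mem_neighborFinset]; exact hadj)), sdiff_subset hcs'⟩
            exact (Finset.mem_sdiff.1 hcs').2 this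
          rcases Finset.mem_insert.1 ha with ha' | ha'
          · rcases Finset.mem_insert.1 hb with hb' | hb'
            · exact absurd (ha'.trans hb'.symm) hab
            · subst ha'; exact key b hb'
          · rcases Finset.mem_insert.1 hb with hb' | hb'
            · subst hb'; exact fun hadj => key a ha' hadj.symm
            · exact ht'.2 a ha' b hb' hab
      calc Amax G s' + 1 = t'.card + 1 := by unfold Amax; rw [hmax]
        _ = (insert u t').card := (Finset.card_insert_of_notMem hut').symm
        _ ≤ Amax G s := Finset.le_sup hins
    calc ∑ v ∈ s, w v / Ws G w s v
        = ∑ v ∈ s', w v / Ws G w s v + ∑ v ∈ t, w v / Ws G w s v := hsplit.symm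
      _ ≤ (Amax G s' : ℝ) + 1 := add_le_add h2 h1
      _ ≤ (Amax G s : ℝ) := by exact_mod_cast h3

end

lemma amax_le_indepNum {V : Type*} [Fintype V] [DecidableEq V] (G : SimpleGraph V)
    [DecidableRel G.Adj] : Amax G Finset.univ ≤ indepNum G := by
  have hne : ((Finset.univ : Finset V).powerset.filter
      (fun t => ∀ a ∈ t, ∀ b ∈ t, a ≠ b → ¬ G.Adj a b)).Nonempty := ⟨∅, by simp⟩
  obtain ⟨t', ht', hmax⟩ := Finset.exists_mem_eq_sup _ hne Finset.card
  simp only [Finset.mem_filter, Finset.mem_powerset] at ht'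
  have hbdd : BddAbove {n | ∃ s : Finset V,
      (∀ a ∈ s, ∀ b ∈ s, a ≠ b → ¬ G.Adj a b) ∧ s.card = n} := by
    refine ⟨Fintype.card V, fun n hn => ?_⟩
    obtain ⟨s, _, rfl⟩ := hn
    exact s.card_le_univ
  have : t'.card ∈ {n | ∃ s : Finset V,
      (∀ a ∈ s, ∀ b ∈ s, a ≠ b → ¬ G.Adj a b) ∧ s.card = n} := ⟨t', ht'.2, rfl⟩
  calc Amax G Finset.univ = t'.card := by unfold Amax; rw [hmax]
    _ ≤ indepNum G := le_csSup hbdd this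


/-- Weighted Turán-type bound: for positive vertex weights `w`, with `W = ∑_v w v` and
`W_u = ∑_{v ∈ N(u) ∪ {u}} w v`, we have `∑_v w v · W_v ≥ W² / α(G)`. -/
theorem stmt_1 {V : Type*} [Fintype V] [DecidableEq V] (G : SimpleGraph V)
    [DecidableRel G.Adj] (w : V → ℝ) (hw : ∀ v, 0 < w v) :
    (∑ v, w v) ^ 2 / (indepNum G : ℝ) ≤
      ∑ v, w v * (∑ x ∈ insert v (G.neighborFinset v), w x) := by
  rcases isEmpty_or_nonempty V with hV | hV
  · simp
  set Wv : V → ℝ := fun v => ∑ x ∈ insert v (G.neighborFinset v), w x with hWv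
  have hWveq : ∀ v, Ws G w Finset.univ v = Wv v := by
    intro v; unfold Ws; rw [Finset.inter_univ]
  have hWvpos : ∀ v, 0 < Wv v := by
    intro v; rw [← hWveq]; exact Ws_pos G w hw (Finset.mem_univ v)
  -- independence number is positive
  have hα1 : 1 ≤ indepNum G := by
    obtain ⟨v⟩ := hV
    have hbdd : BddAbove {n | ∃ s : Finset V,
        (∀ a ∈ s, ∀ b ∈ s, a ≠ b → ¬ G.Adj a b) ∧ s.card = n} := by
      refine ⟨Fintype.card V, fun n hn => ?_⟩
      obtain ⟨s, _, rfl⟩ := hn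
      exact s.card_le_univ
    have : 1 ∈ {n | ∃ s : Finset V,
        (∀ a ∈ s, ∀ b ∈ s, a ≠ b → ¬ G.Adj a b) ∧ s.card = n} :=
      ⟨{v}, by simp, Finset.card_singleton v⟩
    exact le_csSup hbdd this
  have hαpos : (0 : ℝ) < (indepNum G : ℝ) := by exact_mod_cast hα1
  -- Caro–Wei
  have hcw : ∑ v, w v / Wv v ≤ (indepNum G : ℝ) := by
    have := caro_wei G w hw Finset.univ
    simp only [hWveq] at this
    exact this.trans (by exact_mod_cast amax_le_indepNum G)
  -- Cauchy–Schwarz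
  have hcs : (∑ v, w v) ^ 2 ≤ (∑ v, w v / Wv v) * ∑ v, w v * Wv v := by
    refine Finset.sum_sq_le_sum_mul_sum_of_sq_eq_mul _
      (fun i _ => div_nonneg (hw i).le (hWvpos i).le)
      (fun i _ => mul_nonneg (hw i).le (hWvpos i).le)
      (fun i _ => ?_)
    rw [div_mul_eq_mul_div, ← mul_assoc, mul_div_assoc, div_self (hWvpos i).ne', mul_one, sq]
  have hRnn : 0 ≤ ∑ v, w v * Wv v :=
    Finset.sum_nonneg fun i _ => mul_nonneg (hw i).le (hWvpos i).le
  rw [div_le_iff₀ hαpos]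
  calc (∑ v, w v) ^ 2 ≤ (∑ v, w v / Wv v) * ∑ v, w v * Wv v := hcs
    _ ≤ (indepNum G : ℝ) * ∑ v, w v * Wv v := mul_le_mul_of_nonneg_right hcw hRnn
    _ = (∑ v, w v * Wv v) * (indepNum G : ℝ) := mul_comm _ _
end

section
/- Let G = (V, E) be a finite nonempty simple graph in which every vertex u carries a weight w_u > 0, set W := Σ_{v∈V} w_v and W_u := Σ_{v∈N(u)∪{u}} w_v, and let V_heavy := { v ∈ V : W_v ≥ W / (2·α(G)) }, where α(G) is the independence number of G. Then Σ_{v∈V_heavy} w_v > W / (2·α(G)). -/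
open Finset

lemma my_sum_biUnion_le {ι V : Type*} [DecidableEq V] (s : Finset ι) (f : ι → Finset V)
    (w : V → ℝ) (hw : ∀ v, 0 ≤ w v) :
    ∑ x ∈ s.biUnion f, w x ≤ ∑ i ∈ s, ∑ x ∈ f i, w x := by
  classical
  induction s using Finset.induction with
  | empty => simp
  | @insert a s ha ih =>
    rw [Finset.biUnion_insert, Finset.sum_insert ha]
    calc ∑ x ∈ f a ∪ s.biUnion f, w x
        ≤ ∑ x ∈ f a, w x + ∑ x ∈ s.biUnion f, w x := by
          have h := Finset.sum_union_inter (s₁ := f a) (s₂ := s.biUnion f) (f := w)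
          have h2 : 0 ≤ ∑ x ∈ f a ∩ s.biUnion f, w x :=
            Finset.sum_nonneg fun x _ => hw x
          linarith
      _ ≤ ∑ x ∈ f a, w x + ∑ i ∈ s, ∑ x ∈ f i, w x := by linarith [ih]

-- For positive vertex weights `w`, with `W = ∑_v w v` and `W_u = ∑_{v ∈ N(u) ∪ {u}} w v`,
-- the total weight of the heavy vertices (those with `W_v ≥ W / (2 α(G))`) exceeds
-- `W / (2 α(G))`.
open Classical in
theorem stmt_2 {V : Type*} [Fintype V] [DecidableEq V] [Nonempty V] (G : SimpleGraph V)
    [DecidableRel G.Adj] (w : V → ℝ) (hw : ∀ v, 0 < w v) :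
    (∑ v, w v) / (2 * (indepNum G : ℝ)) <
      ∑ v ∈ Finset.univ.filter
        (fun v => (∑ x, w x) / (2 * (indepNum G : ℝ)) ≤
          ∑ x ∈ insert v (G.neighborFinset v), w x), w v := by
  classical
  set W : ℝ := ∑ v, w v with hWdef
  set α : ℕ := indepNum G with hαdef
  have hbdd : BddAbove {n | ∃ s : Finset V,
      (∀ a ∈ s, ∀ b ∈ s, a ≠ b → ¬ G.Adj a b) ∧ s.card = n} := by
    refine ⟨Fintype.card V, ?_⟩
    rintro n ⟨s, -, rfl⟩
    exact s.card_le_univ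
  have hcard_le : ∀ s : Finset V, (∀ a ∈ s, ∀ b ∈ s, a ≠ b → ¬ G.Adj a b) → s.card ≤ α :=
    fun s hs => le_csSup hbdd ⟨s, hs, rfl⟩
  have hα1 : 1 ≤ α := by
    obtain ⟨v⟩ := ‹Nonempty V›
    simpa using hcard_le {v} (by simp)
  have hαpos : (0:ℝ) < (α : ℝ) := by exact_mod_cast hα1
  have hWpos : 0 < W := Finset.sum_pos (fun v _ => hw v) univ_nonempty
  set t : ℝ := W / (2 * (α : ℝ)) with htdef
  have htpos : 0 < t := by positivity
  set Wc : V → ℝ := fun v => ∑ x ∈ insert v (G.neighborFinset v), w x with hWcdef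
  set H : Finset V := univ.filter (fun v => t ≤ Wc v) with hHdef
  set L : Finset V := univ.filter (fun v => ¬ t ≤ Wc v) with hLdef
  have hsplit : ∑ v ∈ H, w v + ∑ v ∈ L, w v = W :=
    Finset.sum_filter_add_sum_filter_not univ _ w
  have htW2 : t ≤ W / 2 := by
    rw [htdef]
    have h1 : (1:ℝ) ≤ (α : ℝ) := by exact_mod_cast hα1
    have h2 : (2:ℝ) ≤ 2 * (α : ℝ) := by linarith
    exact div_le_div_of_nonneg_left hWpos.le (by norm_num) h2
  show t < ∑ v ∈ H, w v
  rcases L.eq_empty_or_nonempty with hL | hLne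
  · have hHuniv : H = univ := by
      rw [hHdef]
      apply Finset.filter_true_of_mem
      intro v _
      by_contra hv
      have : v ∈ L := by
        rw [hLdef, Finset.mem_filter]
        exact ⟨Finset.mem_univ v, hv⟩
      simp [hL] at this
    rw [hHuniv]
    calc t ≤ W / 2 := htW2
      _ < W := by linarith
      _ = ∑ v ∈ univ, w v := rfl
  · -- choose a maximum-size independent subset S of L
    set P : Finset (Finset V) :=
      L.powerset.filter (fun s => ∀ a ∈ s, ∀ b ∈ s, a ≠ b → ¬ G.Adj a b) with hPdef
    have hPne : P.Nonempty := ⟨∅, by simp [hPdef]⟩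
    obtain ⟨S, hSP, hSmax⟩ := P.exists_max_image Finset.card hPne
    have hSL : S ⊆ L := Finset.mem_powerset.1 (Finset.mem_filter.1 hSP).1
    have hSind : ∀ a ∈ S, ∀ b ∈ S, a ≠ b → ¬ G.Adj a b := (Finset.mem_filter.1 hSP).2
    have hcover : ∀ v ∈ L, ∃ s ∈ S, v ∈ insert s (G.neighborFinset s) := by
      intro v hv
      by_contra hcon
      push_neg at hcon
      have hvS : v ∉ S := fun h => hcon v h (Finset.mem_insert_self v _)
      have hadj : ∀ s ∈ S, ¬ G.Adj s v := by
        intro s hs h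
        exact hcon s hs (Finset.mem_insert_of_mem ((G.mem_neighborFinset s v).2 h))
      have hins : insert v S ∈ P := by
        rw [hPdef, Finset.mem_filter, Finset.mem_powerset]
        constructor
        · exact Finset.insert_subset hv hSL
        · intro a ha b hb hab
          rcases Finset.mem_insert.1 ha with ha' | haS
          · rcases Finset.mem_insert.1 hb with hb' | hbS
            · exact absurd (ha'.trans hb'.symm) hab
            · exact fun h => hadj b hbS (ha' ▸ h.symm)
          · rcases Finset.mem_insert.1 hb with hb' | hbS
            · exact fun h => hadj a haS (hb' ▸ h)
            · exact hSind a haS b hbS hab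
      have := hSmax _ hins
      rw [Finset.card_insert_of_notMem hvS] at this
      omega
    have hSne : S.Nonempty := by
      obtain ⟨v, hv⟩ := hLne
      have h1 : ({v} : Finset V) ∈ P := by
        rw [hPdef, Finset.mem_filter, Finset.mem_powerset]
        exact ⟨Finset.singleton_subset_iff.2 hv, by simp⟩
      have := hSmax _ h1
      simp only [Finset.card_singleton] at this
      exact Finset.card_pos.1 (by omega)
    have hsub : L ⊆ S.biUnion (fun s => insert s (G.neighborFinset s)) := by
      intro v hv
      obtain ⟨s, hs, hvs⟩ := hcover v hv
      exact Finset.mem_biUnion.2 ⟨s, hs, hvs⟩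
    have hlight : ∑ v ∈ L, w v < W / 2 := by
      have h1 : ∑ v ∈ L, w v ≤ ∑ x ∈ S.biUnion (fun s => insert s (G.neighborFinset s)), w x :=
        Finset.sum_le_sum_of_subset_of_nonneg hsub (fun x _ _ => (hw x).le)
      have h2 : ∑ x ∈ S.biUnion (fun s => insert s (G.neighborFinset s)), w x
          ≤ ∑ s ∈ S, Wc s :=
        my_sum_biUnion_le S _ w (fun v => (hw v).le)
      have h3 : ∑ s ∈ S, Wc s < ∑ s ∈ S, t := by
        apply Finset.sum_lt_sum_of_nonempty hSne
        intro s hs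
        have := (Finset.mem_filter.1 (hSL hs)).2
        exact not_le.1 this
      have h4 : ∑ s ∈ S, t = (S.card : ℝ) * t := by
        rw [Finset.sum_const, nsmul_eq_mul]
      have h5 : (S.card : ℝ) * t ≤ (α : ℝ) * t := by
        apply mul_le_mul_of_nonneg_right _ htpos.le
        exact_mod_cast hcard_le S hSind
      have h6 : (α : ℝ) * t = W / 2 := by
        rw [htdef]
        field_simp
      linarith
    linarith
end

section
/- Let G = (V, E) be a finite simple graph and let α ≥ 1 be an integer such that for every vertex u of G, every set of pairwise non-adjacent vertices contained in N²(u) has size at most α. Then for every vertex v of G and every integer d ≥ 1, every set of pairwise non-adjacent vertices contained in N^d(v) has size at most α^d. -/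
/-- `ball G u k` is the set of vertices at distance at most `k` from `u` in `G`
(including `u` itself). -/
def ball {V : Type*} (G : SimpleGraph V) (u : V) (k : ℕ) : Set V :=
  {v | ∃ p : G.Walk u v, p.length ≤ k}

/-- If every independent set contained in a ball of radius 2 has size at most `α`, then for
every `d ≥ 1` every independent set contained in a ball of radius `d` has size at most `α^d`. -/
theorem stmt_3 {V : Type*} [Fintype V] (G : SimpleGraph V) (α : ℕ) (hα : 1 ≤ α)
    (hBI : ∀ u : V, ∀ s : Finset V, ↑s ⊆ ball G u 2 →
      (∀ a ∈ s, ∀ b ∈ s, a ≠ b → ¬ G.Adj a b) → s.card ≤ α) :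
    ∀ v : V, ∀ d : ℕ, 1 ≤ d → ∀ s : Finset V, ↑s ⊆ ball G v d →
      (∀ a ∈ s, ∀ b ∈ s, a ≠ b → ¬ G.Adj a b) → s.card ≤ α ^ d := by
  classical
  intro v d hd
  induction d, hd using Nat.le_induction with
  | base =>
    intro s hs hind
    rw [pow_one]
    refine hBI v s ?_ hind
    intro x hx
    obtain ⟨p, hp⟩ := hs hx
    exact ⟨p, hp.trans one_le_two⟩
  | succ d hd ih =>
    intro s hs hind
    -- choose a predecessor `w u` within distance 1 of `u` lying in `ball v d`
    have hw : ∀ u : V, ∃ w : V, u ∈ s → (w ∈ ball G v d ∧ (w = u ∨ G.Adj w u)) := by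
      intro u
      by_cases hu : u ∈ s
      · obtain ⟨p, hp⟩ := hs hu
        rcases Nat.eq_zero_or_pos p.length with h0 | h0
        · have huv : v = u := p.eq_of_length_eq_zero h0
          exact ⟨v, fun _ => ⟨⟨SimpleGraph.Walk.nil, by simp⟩, Or.inl huv⟩⟩
        · set q := p.reverse with hq
          have hnil : ¬ q.Nil := by
            rw [SimpleGraph.Walk.nil_iff_length_eq, hq,
              SimpleGraph.Walk.length_reverse]
            omega
          have hadj : G.Adj u (q.getVert 1) := q.adj_snd hnil
          have hlt : q.tail.length + 1 = q.length :=
            SimpleGraph.Walk.length_tail_add_one hnil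
          refine ⟨(q.getVert 1), fun _ => ⟨⟨q.tail.reverse, ?_⟩, Or.inr hadj.symm⟩⟩
          rw [SimpleGraph.Walk.length_reverse]
          have : q.length = p.length := by rw [hq, SimpleGraph.Walk.length_reverse]
          omega
      · exact ⟨v, fun h => absurd h hu⟩
    choose w hw using hw
    set W : Finset V := s.image w with hW
    -- take a maximum-cardinality independent subset of W
    have hC : (W.powerset.filter
        (fun M => ∀ a ∈ M, ∀ b ∈ M, a ≠ b → ¬ G.Adj a b)).Nonempty := by
      refine ⟨∅, ?_⟩
      simp
    obtain ⟨M, hM, hMmax⟩ := Finset.exists_max_image _ Finset.card hC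
    rw [Finset.mem_filter, Finset.mem_powerset] at hM
    obtain ⟨hMW, hMind⟩ := hM
    -- maximality: every element of W is dominated by M
    have hdom : ∀ x ∈ W, ∃ m ∈ M, x = m ∨ G.Adj x m := by
      intro x hx
      by_contra hcon
      push_neg at hcon
      have hxM : x ∉ M := fun h => (hcon x h).1 rfl
      have hins : insert x M ∈ W.powerset.filter
          (fun M => ∀ a ∈ M, ∀ b ∈ M, a ≠ b → ¬ G.Adj a b) := by
        rw [Finset.mem_filter, Finset.mem_powerset]
        constructor
        · exact Finset.insert_subset hx hMW
        · intro a ha b hb hab hadj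
          rcases Finset.mem_insert.1 ha with ha' | ha' <;>
            rcases Finset.mem_insert.1 hb with hb' | hb'
          · exact hab (ha'.trans hb'.symm)
          · exact (hcon b hb').2 (ha' ▸ hadj)
          · exact (hcon a ha').2 (hb' ▸ hadj).symm
          · exact hMind a ha' b hb' hab hadj
      have := hMmax _ hins
      rw [Finset.card_insert_of_notMem hxM] at this
      omega
    -- assign to each u ∈ s an element of M within distance 2
    have hm : ∀ u : V, ∃ m : V, u ∈ s → (m ∈ M ∧ u ∈ ball G m 2) := by
      intro u
      by_cases hu : u ∈ s
      · have hwW : w u ∈ W := Finset.mem_image_of_mem w hu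
        obtain ⟨m, hmM, hmw⟩ := hdom _ hwW
        have hq1 : ∃ q : G.Walk m (w u), q.length ≤ 1 := by
          rcases hmw with h | h
          · exact ⟨SimpleGraph.Walk.nil.copy rfl h.symm, by simp⟩
          · exact ⟨SimpleGraph.Walk.cons h.symm SimpleGraph.Walk.nil, by simp⟩
        have hq2 : ∃ q : G.Walk (w u) u, q.length ≤ 1 := by
          rcases (hw u hu).2 with h | h
          · exact ⟨SimpleGraph.Walk.nil.copy rfl h, by simp⟩
          · exact ⟨SimpleGraph.Walk.cons h SimpleGraph.Walk.nil, by simp⟩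
        obtain ⟨q1, hq1⟩ := hq1
        obtain ⟨q2, hq2⟩ := hq2
        refine ⟨m, fun _ => ⟨hmM, ⟨q1.append q2, ?_⟩⟩⟩
        rw [SimpleGraph.Walk.length_append]
        omega
      · exact ⟨v, fun h => absurd h hu⟩
    choose f hf using hm
    -- fiber counting
    have hmaps : ∀ u ∈ s, f u ∈ M := fun u hu => (hf u hu).1
    have hfib : ∀ m ∈ M, (s.filter (fun u => f u = m)).card ≤ α := by
      intro m _
      refine hBI m _ ?_ ?_
      · intro x hx
        rw [Finset.coe_filter] at hx
        obtain ⟨hxs, hfx⟩ := hx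
        exact hfx ▸ (hf x hxs).2
      · intro a ha b hb hab
        rw [Finset.mem_filter] at ha hb
        exact hind a ha.1 b hb.1 hab
    have h1 : s.card ≤ α * M.card :=
      Finset.card_le_mul_card_image_of_maps_to hmaps α hfib
    -- bound M.card by α ^ d via the induction hypothesis
    have hMball : ↑M ⊆ ball G v d := by
      intro x hx
      obtain ⟨u, hu, rfl⟩ := Finset.mem_image.1 (hMW hx)
      exact (hw u hu).1
    have h2 : M.card ≤ α ^ d := ih M hMball hMind
    calc s.card ≤ α * M.card := h1
      _ ≤ α * α ^ d := Nat.mul_le_mul_left _ h2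
      _ = α ^ (d + 1) := (pow_succ' α d).symm
end

section
/- Let G = (V, E) be a finite simple graph and let α ≥ 1 be an integer such that for every vertex u of G, every set of pairwise non-adjacent vertices contained in N²(u) has size at most α. Let every vertex x carry a weight w_x > 0 and set W_x := Σ_{y∈N(x)∪{x}} w_y. Then for every vertex u and every integer k ≥ 1, Σ_{x∈N^k(u)} w_x / W_x ≤ α^k. -/
open Finset

namespace BallProof

variable {V : Type*}

lemma mem_ball_self (G : SimpleGraph V) (u : V) (k : ℕ) : u ∈ ball G u k :=
  ⟨SimpleGraph.Walk.nil, by simp⟩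

lemma ball_aux (G : SimpleGraph V) (k : ℕ) :
    ∀ {a b : V} (q : G.Walk b a), q.length ≤ k + 1 →
      b ∈ ball G a k ∨ ∃ y, G.Adj b y ∧ y ∈ ball G a k := by
  intro a b q hq
  cases q with
  | nil => exact Or.inl (mem_ball_self G _ _)
  | cons h r =>
      rename_i y
      right
      refine ⟨y, h, r.reverse, ?_⟩
      rw [SimpleGraph.Walk.length_reverse]
      simp only [SimpleGraph.Walk.length_cons] at hq
      omega

lemma ball_succ_cases (G : SimpleGraph V) (u x : V) (k : ℕ)
    (hx : x ∈ ball G u (k + 1)) :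
    x ∈ ball G u k ∨ ∃ y, G.Adj x y ∧ y ∈ ball G u k := by
  obtain ⟨p, hp⟩ := hx
  exact ball_aux G k p.reverse (by simpa using hp)

lemma greedy [Fintype V] [DecidableEq V] (G : SimpleGraph V) [DecidableRel G.Adj]
    (w : V → ℝ) (hw : ∀ v, 0 < w v) (S : Finset V) :
    ∃ I : Finset V, I ⊆ S ∧ (∀ a ∈ I, ∀ b ∈ I, a ≠ b → ¬ G.Adj a b) ∧
      ∑ x ∈ S, w x / (∑ y ∈ insert x (G.neighborFinset x), w y) ≤ (I.card : ℝ) := by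
  classical
  induction S using Finset.strongInduction with
  | _ S ih =>
    rcases S.eq_empty_or_nonempty with rfl | hS
    · exact ⟨∅, by simp⟩
    · set Wf : V → ℝ := fun x => ∑ y ∈ insert x (G.neighborFinset x), w y with hWf
      obtain ⟨v, hvS, hvmin⟩ := S.exists_min_image Wf hS
      have hWpos : ∀ x : V, 0 < Wf x := fun x =>
        Finset.sum_pos (fun y _ => hw y) ⟨x, Finset.mem_insert_self _ _⟩
      set Nv := insert v (G.neighborFinset v) with hNv
      have hvNv : v ∈ Nv := Finset.mem_insert_self _ _
      have hT : S \ Nv ⊂ S := by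
        refine (Finset.ssubset_iff_of_subset (Finset.sdiff_subset)).mpr ⟨v, hvS, ?_⟩
        simp [hvNv]
      obtain ⟨I, hIsub, hIind, hIsum⟩ := ih (S \ Nv) hT
      have hvI : v ∉ I := fun h => by
        have := hIsub h
        rw [Finset.mem_sdiff] at this
        exact this.2 hvNv
      have hnadj : ∀ b ∈ I, ¬ G.Adj v b := by
        intro b hb hadj
        have := hIsub hb
        rw [Finset.mem_sdiff] at this
        exact this.2 (Finset.mem_insert_of_mem (by rw [SimpleGraph.mem_neighborFinset]; exact hadj))
      refine ⟨insert v I, ?_, ?_, ?_⟩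
      · exact Finset.insert_subset hvS (hIsub.trans Finset.sdiff_subset)
      · intro a ha b hb hab
        rcases Finset.mem_insert.mp ha with rfl | haI
        · rcases Finset.mem_insert.mp hb with rfl | hbI
          · exact absurd rfl hab
          · exact hnadj b hbI
        · rcases Finset.mem_insert.mp hb with rfl | hbI
          · exact fun h => hnadj a haI (G.adj_symm h)
          · exact hIind a haI b hbI hab
      · have hsplit : ∑ x ∈ S, w x / Wf x
            = ∑ x ∈ S ∩ Nv, w x / Wf x + ∑ x ∈ S \ Nv, w x / Wf x :=
          (Finset.sum_inter_add_sum_sdiff S Nv _).symm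
        have hb1 : ∑ x ∈ S ∩ Nv, w x / Wf x ≤ 1 := by
          calc ∑ x ∈ S ∩ Nv, w x / Wf x
              ≤ ∑ x ∈ S ∩ Nv, w x / Wf v := by
                refine Finset.sum_le_sum fun x hx => ?_
                have hxS : x ∈ S := (Finset.mem_inter.mp hx).1
                gcongr
                · exact (hw x).le
                · exact hWpos v
                · exact hvmin x hxS
            _ = (∑ x ∈ S ∩ Nv, w x) / Wf v := by rw [Finset.sum_div]
            _ ≤ Wf v / Wf v := by
                gcongr
                · exact (hWpos v).le
                · rw [hWf]
                  exact Finset.sum_le_sum_of_subset_of_nonneg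
                    Finset.inter_subset_right (fun y _ _ => (hw y).le)
            _ = 1 := div_self (hWpos v).ne'
        rw [hsplit]
        have hcard : ((insert v I).card : ℝ) = (I.card : ℝ) + 1 := by
          rw [Finset.card_insert_of_notMem hvI]
          push_cast
          ring
        rw [hcard]
        linarith
  
lemma indep_card_le [Fintype V] [DecidableEq V] (G : SimpleGraph V) [DecidableRel G.Adj]
    (α : ℕ)
    (hBI : ∀ u : V, ∀ s : Finset V, ↑s ⊆ ball G u 2 →
      (∀ a ∈ s, ∀ b ∈ s, a ≠ b → ¬ G.Adj a b) → s.card ≤ α)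
    (u : V) : ∀ k : ℕ, 1 ≤ k → ∀ I : Finset V, (↑I : Set V) ⊆ ball G u k →
      (∀ a ∈ I, ∀ b ∈ I, a ≠ b → ¬ G.Adj a b) → I.card ≤ α ^ k := by
  intro k hk
  induction k, hk using Nat.le_induction with
  | base =>
      intro I hIsub hIind
      rw [pow_one]
      refine hBI u I (fun x hx => ?_) hIind
      obtain ⟨p, hp⟩ := hIsub hx
      exact ⟨p, hp.trans one_le_two⟩
  | succ k hk ih =>
      classical
      intro I hIsub hIind
      set B : Finset V := Finset.univ.filter (fun x => x ∈ ball G u k) with hB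
      set cand := B.powerset.filter
        (fun s => ∀ a ∈ s, ∀ b ∈ s, a ≠ b → ¬ G.Adj a b) with hcand
      have hne : cand.Nonempty := ⟨∅, by simp [hcand]⟩
      obtain ⟨M, hMc, hMmax⟩ := Finset.exists_max_image cand Finset.card hne
      rw [hcand, Finset.mem_filter, Finset.mem_powerset] at hMc
      have hMsub : M ⊆ B := hMc.1
      have hMind := hMc.2
      have hdom : ∀ x ∈ B, ∃ m ∈ M, m = x ∨ G.Adj x m := by
        intro x hx
        by_contra hcon
        push_neg at hcon
        have hxM : x ∉ M := fun h => (hcon x h).1 rfl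
        have hc : insert x M ∈ cand := by
          rw [hcand, Finset.mem_filter, Finset.mem_powerset]
          refine ⟨Finset.insert_subset hx hMsub, ?_⟩
          intro a ha b hb hab
          rcases Finset.mem_insert.mp ha with rfl | haM
          · rcases Finset.mem_insert.mp hb with rfl | hbM
            · exact absurd rfl hab
            · exact (hcon b hbM).2
          · rcases Finset.mem_insert.mp hb with rfl | hbM
            · exact fun h => (hcon a haM).2 (G.adj_symm h)
            · exact hMind a haM b hbM hab
        have := hMmax _ hc
        rw [Finset.card_insert_of_notMem hxM] at this
        omega
      have hcover : I ⊆ M.biUnion (fun m => I.filter (fun x => x ∈ ball G m 2)) := by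
        intro x hxI
        have hxball : x ∈ ball G u (k + 1) := hIsub hxI
        have hget : ∃ m ∈ M, x ∈ ball G m 2 := by
          rcases ball_succ_cases G u x k hxball with hxk | ⟨y, hxy, hyk⟩
          · obtain ⟨m, hmM, hm⟩ := hdom x (by simp [hB, hxk])
            rcases hm with rfl | hadj
            · exact ⟨_, hmM, mem_ball_self G _ 2⟩
            · exact ⟨m, hmM,
                ⟨SimpleGraph.Walk.cons (G.adj_symm hadj) SimpleGraph.Walk.nil, by simp⟩⟩
          · obtain ⟨m, hmM, hm⟩ := hdom y (by simp [hB, hyk])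
            rcases hm with rfl | hadj
            · exact ⟨_, hmM,
                ⟨SimpleGraph.Walk.cons (G.adj_symm hxy) SimpleGraph.Walk.nil, by simp⟩⟩
            · exact ⟨m, hmM,
                ⟨SimpleGraph.Walk.cons (G.adj_symm hadj)
                  (SimpleGraph.Walk.cons (G.adj_symm hxy) SimpleGraph.Walk.nil), by simp⟩⟩
        obtain ⟨m, hmM, hm2⟩ := hget
        exact Finset.mem_biUnion.mpr ⟨m, hmM, Finset.mem_filter.mpr ⟨hxI, hm2⟩⟩
      have hMcard : M.card ≤ α ^ k := by
        refine ih M (fun x hx => ?_) hMind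
        have := hMsub hx
        rw [hB, Finset.mem_filter] at this
        exact this.2
      calc I.card ≤ (M.biUnion (fun m => I.filter (fun x => x ∈ ball G m 2))).card :=
            Finset.card_le_card hcover
        _ ≤ ∑ m ∈ M, (I.filter (fun x => x ∈ ball G m 2)).card :=
            Finset.card_biUnion_le
        _ ≤ ∑ _m ∈ M, α := by
            refine Finset.sum_le_sum fun m _ => ?_
            refine hBI m _ (fun x hx => ?_) (fun a ha b hb hab =>
              hIind a (Finset.mem_filter.mp ha).1 b (Finset.mem_filter.mp hb).1 hab)
            exact (Finset.mem_filter.mp hx).2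
        _ = M.card * α := by rw [Finset.sum_const, smul_eq_mul]
        _ ≤ α ^ k * α := Nat.mul_le_mul_right α hMcard
        _ = α ^ (k + 1) := (pow_succ α k).symm

end BallProof

-- In an `α`-bounded independence graph with positive vertex weights `w` and
-- `W_x = ∑_{y ∈ N(x) ∪ {x}} w y`, for every vertex `u` and `k ≥ 1` we have
-- `∑_{x ∈ N^k(u)} w x / W_x ≤ α^k`.
open Classical in
theorem stmt_4 {V : Type*} [Fintype V] [DecidableEq V] (G : SimpleGraph V)
    [DecidableRel G.Adj] (α : ℕ) (hα : 1 ≤ α)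
    (hBI : ∀ u : V, ∀ s : Finset V, ↑s ⊆ ball G u 2 →
      (∀ a ∈ s, ∀ b ∈ s, a ≠ b → ¬ G.Adj a b) → s.card ≤ α)
    (w : V → ℝ) (hw : ∀ v, 0 < w v) :
    ∀ u : V, ∀ k : ℕ, 1 ≤ k →
      ∑ x ∈ Finset.univ.filter (· ∈ ball G u k),
          w x / (∑ y ∈ insert x (G.neighborFinset x), w y) ≤ (α : ℝ) ^ k := by
  intro u k hk
  obtain ⟨I, hIsub, hIind, hIsum⟩ :=
    BallProof.greedy G w hw (Finset.univ.filter (· ∈ ball G u k))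
  refine hIsum.trans ?_
  have h1 : I.card ≤ α ^ k := by
    refine BallProof.indep_card_le G α hBI u k hk I (fun x hx => ?_) hIind
    have := hIsub hx
    rw [Finset.mem_filter] at this
    exact this.2
  exact_mod_cast h1
end

section
/- For every real Γ > 0 and every integer i ≥ 1, define C_i(Γ) := (Γ·2^{-(i+1)})² · exp(−Γ·2^{-(i+1)}). Then: (a) for every integer i ≥ 1 with 2^i ≥ Γ one has C_{i+1}(Γ) < C_i(Γ)/2; and (b) for every integer i ≥ 1 with 2^{i+4} ≤ Γ one has C_i(Γ) < C_{i+1}(Γ)/2. -/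
/-- Geometric decay of the per-channel bounds
`C_i(Γ) = (Γ·2^{-(i+1)})² · exp(−Γ·2^{-(i+1)})` on both sides of `λ ≈ log₂ Γ`:
(a) if `2^i ≥ Γ` then `C_{i+1}(Γ) < C_i(Γ)/2`;
(b) if `2^{i+4} ≤ Γ` then `C_i(Γ) < C_{i+1}(Γ)/2`. -/
theorem stmt_5 (Γ : ℝ) (hΓ : 0 < Γ) :
    (∀ i : ℕ, 1 ≤ i → Γ ≤ (2 : ℝ) ^ i →
      (Γ * (2 : ℝ) ^ (-((i : ℤ) + 2))) ^ 2 * Real.exp (-(Γ * (2 : ℝ) ^ (-((i : ℤ) + 2)))) <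
        (Γ * (2 : ℝ) ^ (-((i : ℤ) + 1))) ^ 2 *
          Real.exp (-(Γ * (2 : ℝ) ^ (-((i : ℤ) + 1)))) / 2) ∧
    (∀ i : ℕ, 1 ≤ i → (2 : ℝ) ^ (i + 4) ≤ Γ →
      (Γ * (2 : ℝ) ^ (-((i : ℤ) + 1))) ^ 2 * Real.exp (-(Γ * (2 : ℝ) ^ (-((i : ℤ) + 1)))) <
        (Γ * (2 : ℝ) ^ (-((i : ℤ) + 2))) ^ 2 *
          Real.exp (-(Γ * (2 : ℝ) ^ (-((i : ℤ) + 2)))) / 2) := by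
  have h20 : (2 : ℝ) ≠ 0 := by norm_num
  constructor
  · intro i hi hle
    set x := Γ * (2 : ℝ) ^ (-((i : ℤ) + 2)) with hx
    have hxpos : 0 < x := by positivity
    have h2 : Γ * (2 : ℝ) ^ (-((i : ℤ) + 1)) = 2 * x := by
      rw [hx, show (-((i : ℤ) + 2)) = (-((i : ℤ) + 1)) + (-1) by ring,
        zpow_add₀ h20, zpow_neg_one]
      ring
    rw [h2]
    have hxle : x ≤ 1 / 4 := by
      have := mul_le_mul_of_nonneg_right hle
        (le_of_lt (zpow_pos (by norm_num : (0:ℝ) < 2) (-((i : ℤ) + 2))))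
      calc x ≤ (2 : ℝ) ^ (i : ℕ) * (2 : ℝ) ^ (-((i : ℤ) + 2)) := this
        _ = (2 : ℝ) ^ (i : ℤ) * (2 : ℝ) ^ (-((i : ℤ) + 2)) := by rw [zpow_natCast]
        _ = (2 : ℝ) ^ ((i : ℤ) + (-((i : ℤ) + 2))) := by rw [← zpow_add₀ h20]
        _ = 1 / 4 := by norm_num
    have hexp : Real.exp x < 2 := by
      have h1 : x < Real.log 2 := lt_of_le_of_lt hxle (by
        have := Real.log_two_gt_d9; linarith)
      calc Real.exp x < Real.exp (Real.log 2) := Real.exp_lt_exp.mpr h1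
        _ = 2 := Real.exp_log (by norm_num)
    have hsplit : Real.exp (-x) = Real.exp x * Real.exp (-(2 * x)) := by
      rw [← Real.exp_add]; ring_nf
    rw [hsplit]
    have he2 : 0 < Real.exp (-(2 * x)) := Real.exp_pos _
    nlinarith [sq_nonneg x, mul_pos (mul_pos hxpos hxpos) he2]
  · intro i hi hle
    set x := Γ * (2 : ℝ) ^ (-((i : ℤ) + 2)) with hx
    have hxpos : 0 < x := by positivity
    have h2 : Γ * (2 : ℝ) ^ (-((i : ℤ) + 1)) = 2 * x := by
      rw [hx, show (-((i : ℤ) + 2)) = (-((i : ℤ) + 1)) + (-1) by ring,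
        zpow_add₀ h20, zpow_neg_one]
      ring
    rw [h2]
    have hxge : (4 : ℝ) ≤ x := by
      have hle' : (2 : ℝ) ^ (i + 4 : ℕ) * (2 : ℝ) ^ (-((i : ℤ) + 2)) ≤ x :=
        mul_le_mul_of_nonneg_right hle
          (le_of_lt (zpow_pos (by norm_num : (0:ℝ) < 2) (-((i : ℤ) + 2))))
      calc (4 : ℝ) = (2 : ℝ) ^ (((i : ℤ) + 4) + (-((i : ℤ) + 2))) := by
            rw [show ((i : ℤ) + 4) + (-((i : ℤ) + 2)) = 2 by ring]; norm_num
        _ = (2 : ℝ) ^ ((i : ℤ) + 4) * (2 : ℝ) ^ (-((i : ℤ) + 2)) := by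
            rw [← zpow_add₀ h20]
        _ = (2 : ℝ) ^ (i + 4 : ℕ) * (2 : ℝ) ^ (-((i : ℤ) + 2)) := by
            rw [← zpow_natCast (2 : ℝ) (i + 4)]; push_cast; ring_nf
        _ ≤ x := hle'
    have hexp : (8 : ℝ) < Real.exp x := by
      have h4 : (9 : ℝ) ≤ Real.exp 4 := by
        have := Real.add_one_le_exp (2 : ℝ)
        calc (9 : ℝ) ≤ (Real.exp 2) ^ 2 := by nlinarith [Real.exp_pos (2:ℝ)]
          _ = Real.exp 4 := by rw [← Real.exp_nat_mul]; norm_num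
      calc (8 : ℝ) < 9 := by norm_num
        _ ≤ Real.exp 4 := h4
        _ ≤ Real.exp x := Real.exp_le_exp.mpr hxge
    have hsplit : Real.exp (-(2 * x)) * Real.exp x = Real.exp (-x) := by
      rw [← Real.exp_add]; ring_nf
    have he2 : 0 < Real.exp (-(2 * x)) := Real.exp_pos _
    nlinarith [mul_pos (mul_pos hxpos hxpos) he2]
end

section
/- Let π ∈ (0, 1/2], let i ≥ 1 be an integer, let N be a finite set equipped with a function γ : N → [0, 1/2], let v ∈ N, and let g ∈ [0, 1/2]. Then π·g·2^{-i} · (1−π)·γ(v)·2^{-i} · ∏_{w∈N\{v}} (1 − (1−π)·γ(w)·2^{-i}) ≤ (4/3) · π · g · γ(v) · 2^{-2i} · exp(−(1/2)·2^{-i}·Σ_{w∈N} γ(w)). -/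
open Finset

/-- Upper bound on the probability that a node with activity `g` listens on channel `i`,
a designated neighbor `v` broadcasts on channel `i`, and no other neighbor broadcasts
on channel `i`. -/
theorem stmt_7 {α : Type*} [DecidableEq α] (N : Finset α) (γ : α → ℝ)
    (hγ : ∀ w ∈ N, 0 ≤ γ w ∧ γ w ≤ 1 / 2)
    (pl : ℝ) (hpl0 : 0 < pl) (hpl1 : pl ≤ 1 / 2)
    (i : ℕ) (hi : 1 ≤ i)
    (v : α) (hv : v ∈ N) (g : ℝ) (hg0 : 0 ≤ g) (hg1 : g ≤ 1 / 2) :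
    pl * g * (2 : ℝ) ^ (-(i : ℤ)) * ((1 - pl) * γ v * (2 : ℝ) ^ (-(i : ℤ))) *
        ∏ w ∈ N.erase v, (1 - (1 - pl) * γ w * (2 : ℝ) ^ (-(i : ℤ))) ≤
      4 / 3 * pl * g * γ v * (2 : ℝ) ^ (-(2 * (i : ℤ))) *
        Real.exp (-(1 / 2 * (2 : ℝ) ^ (-(i : ℤ)) * ∑ w ∈ N, γ w)) := by
  set t : ℝ := (2 : ℝ) ^ (-(i : ℤ)) with ht_def
  have ht0 : (0 : ℝ) < t := zpow_pos (by norm_num) _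
  have ht : t ≤ 1 / 2 := by
    rw [ht_def, zpow_neg, zpow_natCast]
    have h2 : (2 : ℝ) ≤ 2 ^ i := by
      calc (2 : ℝ) = 2 ^ 1 := (pow_one 2).symm
        _ ≤ 2 ^ i := pow_le_pow_right₀ one_le_two hi
    have := inv_anti₀ (by norm_num : (0:ℝ) < 2) h2
    simpa using this
  have hc0 : (1 : ℝ) / 2 ≤ 1 - pl := by linarith
  have hc1 : 1 - pl ≤ 1 := by linarith
  -- each factor bound
  have hfac : ∀ w ∈ N.erase v,
      1 - (1 - pl) * γ w * t ≤ Real.exp (-(1 / 2 * γ w * t)) := by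
    intro w hw
    have hγw := hγ w (mem_of_mem_erase hw)
    have h1 : 1 - (1 - pl) * γ w * t ≤ 1 - 1 / 2 * γ w * t := by
      nlinarith [mul_nonneg (mul_nonneg (by linarith : (0:ℝ) ≤ 1 - pl - 1 / 2) hγw.1) ht0.le]
    have h2 : 1 - 1 / 2 * γ w * t ≤ Real.exp (-(1 / 2 * γ w * t)) := by
      have := Real.add_one_le_exp (-(1 / 2 * γ w * t))
      linarith
    linarith
  have hfac0 : ∀ w ∈ N.erase v, 0 ≤ 1 - (1 - pl) * γ w * t := by
    intro w hw
    have hγw := hγ w (mem_of_mem_erase hw)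
    have hgt : γ w * t ≤ 1 / 4 := by nlinarith [hγw.1, hγw.2, ht0.le, ht]
    nlinarith [mul_nonneg hγw.1 ht0.le, mul_nonneg (by linarith : (0:ℝ) ≤ pl) (mul_nonneg hγw.1 ht0.le)]
  have hprod : ∏ w ∈ N.erase v, (1 - (1 - pl) * γ w * t) ≤
      Real.exp (-(1 / 2 * t * ∑ w ∈ N.erase v, γ w)) := by
    calc ∏ w ∈ N.erase v, (1 - (1 - pl) * γ w * t)
        ≤ ∏ w ∈ N.erase v, Real.exp (-(1 / 2 * γ w * t)) :=
          Finset.prod_le_prod hfac0 hfac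
      _ = Real.exp (∑ w ∈ N.erase v, -(1 / 2 * γ w * t)) := (Real.exp_sum _ _).symm
      _ = Real.exp (-(1 / 2 * t * ∑ w ∈ N.erase v, γ w)) := by
          congr 1
          rw [Finset.sum_neg_distrib, neg_inj, Finset.mul_sum]
          exact Finset.sum_congr rfl fun w _ => by ring
  have hγv := hγ v hv
  -- exp(1/8) ≤ 4/3
  have hexp18 : Real.exp (1 / 8) ≤ 4 / 3 := by
    have h8 : (Real.exp (1 / 8)) ^ 8 = Real.exp 1 := by
      rw [← Real.exp_nat_mul]; norm_num
    have he : Real.exp 1 < 2.7182818286 := Real.exp_one_lt_d9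
    have : (Real.exp (1 / 8)) ^ 8 < (4 / 3 : ℝ) ^ 8 := by
      rw [h8]; nlinarith
    exact le_of_lt (lt_of_pow_lt_pow_left₀ 8 (by norm_num) this)
  have hkey : Real.exp (1 / 2 * γ v * t) ≤ 4 / 3 := by
    calc Real.exp (1 / 2 * γ v * t) ≤ Real.exp (1 / 8) := by
          apply Real.exp_le_exp.mpr
          nlinarith [hγv.1, hγv.2, ht0.le]
      _ ≤ 4 / 3 := hexp18
  -- split the sum
  have hsum : ∑ w ∈ N, γ w = γ v + ∑ w ∈ N.erase v, γ w :=
    (Finset.add_sum_erase N γ hv).symm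
  have hEpos : 0 < Real.exp (-(1 / 2 * t * ∑ w ∈ N.erase v, γ w)) := Real.exp_pos _
  have hmain : (1 - pl) * ∏ w ∈ N.erase v, (1 - (1 - pl) * γ w * t) ≤
      4 / 3 * Real.exp (-(1 / 2 * t * ∑ w ∈ N, γ w)) := by
    have hP0 : 0 ≤ ∏ w ∈ N.erase v, (1 - (1 - pl) * γ w * t) :=
      Finset.prod_nonneg hfac0
    have h1 : (1 - pl) * ∏ w ∈ N.erase v, (1 - (1 - pl) * γ w * t) ≤
        Real.exp (-(1 / 2 * t * ∑ w ∈ N.erase v, γ w)) := by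
      calc (1 - pl) * ∏ w ∈ N.erase v, (1 - (1 - pl) * γ w * t)
          ≤ 1 * ∏ w ∈ N.erase v, (1 - (1 - pl) * γ w * t) :=
            mul_le_mul_of_nonneg_right hc1 hP0
        _ = ∏ w ∈ N.erase v, (1 - (1 - pl) * γ w * t) := one_mul _
        _ ≤ _ := hprod
    have h2 : Real.exp (-(1 / 2 * t * ∑ w ∈ N.erase v, γ w)) ≤
        4 / 3 * Real.exp (-(1 / 2 * t * ∑ w ∈ N, γ w)) := by
      rw [hsum]
      have : -(1 / 2 * t * (γ v + ∑ w ∈ N.erase v, γ w)) =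
          -(1 / 2 * t * ∑ w ∈ N.erase v, γ w) + -(1 / 2 * γ v * t) := by ring
      rw [this, Real.exp_add]
      have h3 : 1 ≤ 4 / 3 * Real.exp (-(1 / 2 * γ v * t)) := by
        have he := Real.exp_pos (1 / 2 * γ v * t)
        rw [Real.exp_neg, ← div_eq_mul_inv, le_div_iff₀ he]
        linarith
      nlinarith [hEpos, Real.exp_pos (-(1 / 2 * γ v * t))]
    linarith
  -- put it together
  have ht2 : (2 : ℝ) ^ (-(2 * (i : ℤ))) = t * t := by
    rw [ht_def, ← zpow_add₀ (by norm_num : (2:ℝ) ≠ 0)]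
    ring_nf
  rw [ht2]
  have hnn : 0 ≤ pl * g * γ v * t * t :=
    mul_nonneg (mul_nonneg (mul_nonneg (mul_nonneg hpl0.le hg0) hγv.1) ht0.le) ht0.le
  calc pl * g * t * ((1 - pl) * γ v * t) * ∏ w ∈ N.erase v, (1 - (1 - pl) * γ w * t)
      = pl * g * γ v * t * t *
        ((1 - pl) * ∏ w ∈ N.erase v, (1 - (1 - pl) * γ w * t)) := by ring
    _ ≤ pl * g * γ v * t * t * (4 / 3 * Real.exp (-(1 / 2 * t * ∑ w ∈ N, γ w))) :=
        mul_le_mul_of_nonneg_left hmain hnn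
    _ = 4 / 3 * pl * g * γ v * (t * t) * Real.exp (-(1 / 2 * t * ∑ w ∈ N, γ w)) := by ring
end

section
/- Let π ∈ (0, 1/2], let i ≥ 1 be an integer, let N be a finite set equipped with a function γ : N → [0, 1/2], let g ∈ [0, 1/2], and set Γ° := Σ_{w∈N} γ(w); assume Γ° > 0. Then Σ_{v∈N} [ π·g·2^{-i} · (1−π)·γ(v)·2^{-i} · ∏_{w∈N\{v}} (1 − (1−π)·γ(w)·2^{-i}) ] ≤ 8·π·(g/Γ°)·(Γ°·2^{-(i+1)})²·exp(−Γ°·2^{-(i+1)}). -/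
open Finset

/-- Summing the herald-candidate bound over all designated senders `v ∈ N`:
`∑_{v∈N} [π g 2^{-i} · (1−π) γ(v) 2^{-i} · ∏_{w∈N\{v}} (1 − (1−π) γ(w) 2^{-i})]
  ≤ 8 π (g/Γ°) (Γ° 2^{-(i+1)})² exp(−Γ° 2^{-(i+1)})` where `Γ° = ∑_{w∈N} γ(w)`. -/
theorem stmt_8 {α : Type*} [DecidableEq α] (N : Finset α) (γ : α → ℝ)
    (hγ : ∀ w ∈ N, 0 ≤ γ w ∧ γ w ≤ 1 / 2)
    (pl : ℝ) (hpl0 : 0 < pl) (hpl1 : pl ≤ 1 / 2)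
    (i : ℕ) (hi : 1 ≤ i)
    (g : ℝ) (hg0 : 0 ≤ g) (hg1 : g ≤ 1 / 2)
    (hΓ : 0 < ∑ w ∈ N, γ w) :
    ∑ v ∈ N, (pl * g * (2 : ℝ) ^ (-(i : ℤ)) * ((1 - pl) * γ v * (2 : ℝ) ^ (-(i : ℤ))) *
        ∏ w ∈ N.erase v, (1 - (1 - pl) * γ w * (2 : ℝ) ^ (-(i : ℤ)))) ≤
      8 * pl * (g / ∑ w ∈ N, γ w) *
        ((∑ w ∈ N, γ w) * (2 : ℝ) ^ (-((i : ℤ) + 1))) ^ 2 *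
        Real.exp (-((∑ w ∈ N, γ w) * (2 : ℝ) ^ (-((i : ℤ) + 1)))) := by
  set x : ℝ := (2 : ℝ) ^ (-(i : ℤ)) with hxdef
  set Γ : ℝ := ∑ w ∈ N, γ w with hΓdef
  have hx0 : (0:ℝ) < x := by positivity
  have hxle : x ≤ 1/2 := by
    rw [hxdef]
    calc (2:ℝ) ^ (-(i:ℤ)) ≤ (2:ℝ) ^ (-(1:ℤ)) := by
          apply zpow_le_zpow_right₀ (by norm_num : (1:ℝ) ≤ 2)
          omega
      _ = 1/2 := by norm_num
  have h2 : (2:ℝ) ^ (-((i:ℤ) + 1)) = x / 2 := by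
    rw [show -((i:ℤ)+1) = -(i:ℤ) + (-1) by ring,
      zpow_add₀ (by norm_num : (2:ℝ) ≠ 0)]
    rw [hxdef]; norm_num; ring
  rw [h2]
  set E : ℝ := Real.exp (-(Γ * (x/2))) with hEdef
  have hE0 : 0 < E := Real.exp_pos _
  have hpl1' : (1:ℝ)/2 ≤ 1 - pl := by linarith
  have hpl0' : (0:ℝ) ≤ 1 - pl := by linarith
  have hexp18 : Real.exp ((1:ℝ)/8) ≤ 8/7 := by
    have h78 : (7/8:ℝ) ≤ Real.exp (-(1/8)) := by
      linarith [Real.add_one_le_exp (-(1/8):ℝ)]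
    have := Real.exp_pos (-(1/8):ℝ)
    calc Real.exp ((1:ℝ)/8) = (Real.exp (-(1/8)))⁻¹ := by
          rw [Real.exp_neg]; norm_num
      _ ≤ (7/8:ℝ)⁻¹ := by
          apply inv_anti₀ (by norm_num) h78
      _ = 8/7 := by norm_num
  -- per-term bound
  have key : ∀ v ∈ N,
      pl * g * x * ((1 - pl) * γ v * x) *
        ∏ w ∈ N.erase v, (1 - (1 - pl) * γ w * x)
      ≤ pl * g * x * ((1 - pl) * γ v * x) * (8/7 * E) := by
    intro v hv
    have hγv := hγ v hv
    have hC : 0 ≤ pl * g * x * ((1 - pl) * γ v * x) := by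
      have := hγv.1
      positivity
    apply mul_le_mul_of_nonneg_left _ hC
    have hfac : ∀ w ∈ N.erase v, (0:ℝ) ≤ 1 - (1 - pl) * γ w * x := by
      intro w hw
      have hw' := hγ w (Finset.mem_of_mem_erase hw)
      have h1 : γ w * x ≤ 1/4 := by nlinarith [hw'.1, hw'.2, hx0.le, hxle]
      have h2 : 0 ≤ γ w * x := mul_nonneg hw'.1 hx0.le
      nlinarith [mul_le_mul_of_nonneg_left h1 hpl0', mul_le_mul_of_nonneg_right (show 1 - pl ≤ 1 by linarith) h2]
    have hprod : ∏ w ∈ N.erase v, (1 - (1 - pl) * γ w * x)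
        ≤ Real.exp (-(∑ w ∈ N.erase v, (1 - pl) * γ w * x)) := by
      calc ∏ w ∈ N.erase v, (1 - (1 - pl) * γ w * x)
          ≤ ∏ w ∈ N.erase v, Real.exp (-((1 - pl) * γ w * x)) := by
            apply Finset.prod_le_prod hfac
            intro w hw
            linarith [Real.add_one_le_exp (-((1 - pl) * γ w * x))]
        _ = Real.exp (∑ w ∈ N.erase v, -((1 - pl) * γ w * x)) :=
            (Real.exp_sum _ _).symm
        _ = Real.exp (-(∑ w ∈ N.erase v, (1 - pl) * γ w * x)) := by
            rw [Finset.sum_neg_distrib]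
    have hsum : ∑ w ∈ N.erase v, (1 - pl) * γ w * x = (1 - pl) * (Γ - γ v) * x := by
      rw [← Finset.sum_mul, ← Finset.mul_sum, Finset.sum_erase_eq_sub hv]
    have hΓγ : 0 ≤ Γ - γ v := by
      rw [← Finset.sum_erase_eq_sub hv]
      exact Finset.sum_nonneg fun w hw => (hγ w (Finset.mem_of_mem_erase hw)).1
    have hS : -((1 - pl) * (Γ - γ v) * x) ≤ 1/8 + (-(Γ * (x/2))) := by
      nlinarith [mul_nonneg (by linarith : (0:ℝ) ≤ 1 - pl - 1/2)
          (mul_nonneg hΓγ hx0.le),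
        mul_le_mul hγv.2 hxle hx0.le (by norm_num : (0:ℝ) ≤ 1/2)]
    calc ∏ w ∈ N.erase v, (1 - (1 - pl) * γ w * x)
        ≤ Real.exp (-((1 - pl) * (Γ - γ v) * x)) := by rw [← hsum]; exact hprod
      _ ≤ Real.exp (1/8 + (-(Γ * (x/2)))) := Real.exp_le_exp.mpr hS
      _ = Real.exp (1/8) * E := by rw [Real.exp_add]
      _ ≤ 8/7 * E := mul_le_mul_of_nonneg_right hexp18 hE0.le
  calc ∑ v ∈ N, (pl * g * x * ((1 - pl) * γ v * x) *
        ∏ w ∈ N.erase v, (1 - (1 - pl) * γ w * x))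
      ≤ ∑ v ∈ N, pl * g * x * ((1 - pl) * γ v * x) * (8/7 * E) :=
        Finset.sum_le_sum key
    _ = ∑ v ∈ N, γ v * (pl * g * x * ((1 - pl) * x) * (8/7 * E)) := by
        apply Finset.sum_congr rfl; intro v hv; ring
    _ = Γ * (pl * g * x * ((1 - pl) * x) * (8/7 * E)) := by
        rw [← Finset.sum_mul]
    _ = (pl * g * Γ * x^2 * E) * ((1 - pl) * (8/7)) := by ring
    _ ≤ (pl * g * Γ * x^2 * E) * 2 := by
        apply mul_le_mul_of_nonneg_left (by linarith) (by positivity)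
    _ = 8 * pl * (g / Γ) * (Γ * (x/2))^2 * E := by
        field_simp
        ring
end

section
/- There is an absolute constant c > 0 such that in the herald-protocol round model, for every vertex x with Γ(x) > 0 and every channel i ∈ {1,…,n_A}, the probability that x receives a message on channel i is at most c · π_ℓ · γ(x) / Γ(x). -/
open Finset

/-- The action a vertex takes in one round: `none` is idle, `some (i, false)` is listening on
channel `i+1`, and `some (i, true)` is broadcasting on channel `i+1` (channels are numbered
`1, …, nA`). -/
abbrev Act (nA : ℕ) := Option (Fin nA × Bool)

/-- The probability of each action in the herald-protocol round model, for a vertex with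
activity `g` and listening probability `p`: on channel `i+1` the vertex listens with
probability `p·g·2^{-(i+1)}` and broadcasts with probability `(1−p)·g·2^{-(i+1)}`; with the
remaining probability it is idle. -/
noncomputable def actProb (nA : ℕ) (p g : ℝ) : Act nA → ℝ
  | some (i, false) => p * g * (2 : ℝ) ^ (-((i.1 : ℤ) + 1))
  | some (i, true) => (1 - p) * g * (2 : ℝ) ^ (-((i.1 : ℤ) + 1))
  | none => 1 - ∑ i : Fin nA, g * (2 : ℝ) ^ (-((i.1 : ℤ) + 1))

open Classical in
/-- The probability of an event `E` in one round of the herald-protocol round model, where all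
vertices choose their actions independently. -/
noncomputable def roundPr {V : Type*} [Fintype V] [DecidableEq V] (nA : ℕ) (p : ℝ)
    (γ : V → ℝ) (E : (V → Act nA) → Prop) : ℝ :=
  ∑ f : V → Act nA, if E f then ∏ v, actProb nA p (γ v) (f v) else 0

/-- `v` listens on channel `i` (i.e. channel number `i+1`). -/
def listens {V : Type*} {nA : ℕ} (f : V → Act nA) (v : V) (i : Fin nA) : Prop :=
  f v = some (i, false)

/-- `v` broadcasts on channel `i` (i.e. channel number `i+1`). -/
def broadcasts {V : Type*} {nA : ℕ} (f : V → Act nA) (v : V) (i : Fin nA) : Prop :=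
  f v = some (i, true)

/-- `v` operates (listens or broadcasts) on channel `i`. -/
def operates {V : Type*} {nA : ℕ} (f : V → Act nA) (v : V) (i : Fin nA) : Prop :=
  listens f v i ∨ broadcasts f v i

open Classical in
/-- `v` receives a message on channel `i`: it listens on channel `i` and exactly one of its
neighbors broadcasts on channel `i`. -/
def receivesOn {V : Type*} [Fintype V] [DecidableEq V] (G : SimpleGraph V)
    [DecidableRel G.Adj] {nA : ℕ} (f : V → Act nA) (v : V) (i : Fin nA) : Prop :=
  listens f v i ∧ ((G.neighborFinset v).filter fun w => broadcasts f w i).card = 1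

/-- `v` receives a message (on some channel). -/
def receives {V : Type*} [Fintype V] [DecidableEq V] (G : SimpleGraph V)
    [DecidableRel G.Adj] {nA : ℕ} (f : V → Act nA) (v : V) : Prop :=
  ∃ i : Fin nA, receivesOn G f v i

/-- The independence number of the subgraph of `G` induced by a vertex set `S`. -/
noncomputable def indepNumOn {V : Type*} [Fintype V] (G : SimpleGraph V) (S : Set V) : ℕ :=
  sSup {n | ∃ s : Finset V, ↑s ⊆ S ∧ (∀ a ∈ s, ∀ b ∈ s, a ≠ b → ¬ G.Adj a b) ∧ s.card = n}

/-- `Γ(x) = ∑_{y ∈ N(x) ∪ {x}} γ(y)`. -/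
noncomputable def Gam {V : Type*} [Fintype V] [DecidableEq V] (G : SimpleGraph V)
    [DecidableRel G.Adj] (γ : V → ℝ) (x : V) : ℝ :=
  ∑ y ∈ insert x (G.neighborFinset x), γ y

/-- `Γ°(x) = ∑_{y ∈ N(x)} γ(y)`. -/
noncomputable def GamO {V : Type*} [Fintype V] [DecidableEq V] (G : SimpleGraph V)
    [DecidableRel G.Adj] (γ : V → ℝ) (x : V) : ℝ :=
  ∑ y ∈ G.neighborFinset x, γ y

/-!
For `x` to receive on channel `i`, it must listen there (probability `π_ℓ γ(x) t` with
`t = 2^{-i}`) and exactly one neighbor must broadcast there. By independence the second event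
has probability `B = ∑_w q_w ∏_{v ≠ w} (1 - q_v)`, where `q_v = (1 - π_ℓ) γ(v) t ≤ 1/4`, and
`1 - q ≤ e^{-q}` gives `B ≤ (4/3) S e^{-S}` with `S = ∑_v q_v`. Since `π_ℓ ≤ 1/2` we have
`S ≥ t Γ°(x) / 2`, so `t Γ(x) ≤ 1/4 + 2S`, and `S^k e^{-S} ≤ k!` bounds `t Γ(x) B` by an absolute
constant.
-/

section RoundProbability

variable {V : Type*} [Fintype V] [DecidableEq V] {nA : ℕ} (p : ℝ) (γ : V → ℝ)

theorem sum_actProb (g : ℝ) : ∑ a : Act nA, actProb nA p g a = 1 := by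
  simp only [Fintype.sum_option, Fintype.sum_prod_type, Fintype.sum_bool, actProb, ← add_mul,
    sub_add_cancel, one_mul]

theorem roundPr_forall_mem (A : V → Finset (Act nA)) :
    roundPr nA p γ (fun f => ∀ v, f v ∈ A v) = ∏ v, ∑ a ∈ A v, actProb nA p (γ v) a := by
  classical
  simp only [roundPr, prod_univ_sum, ← Fintype.mem_piFinset]
  rw [← sum_filter]
  congr 1
  ext f
  simp

theorem roundPr_exists_mem {ι : Type*} (s : Finset ι) (E : ι → (V → Act nA) → Prop)
    (hdisj : ∀ f, ∀ w ∈ s, ∀ w' ∈ s, E w f → E w' f → w = w') :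
    roundPr nA p γ (fun f => ∃ w ∈ s, E w f) = ∑ w ∈ s, roundPr nA p γ (E w) := by
  classical
  simp only [roundPr]
  rw [sum_comm]
  refine sum_congr rfl fun f _ => ?_
  by_cases h : ∃ w ∈ s, E w f
  · obtain ⟨w, hw, hE⟩ := h
    rw [if_pos ⟨w, hw, hE⟩, sum_eq_single_of_mem w hw, if_pos hE]
    exact fun w' hw' hne => if_neg fun hE' => hne (hdisj f w' hw' w hw hE' hE)
  · rw [if_neg h]
    exact (sum_eq_zero fun w hw => if_neg fun hE => h ⟨w, hw, hE⟩).symm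

end RoundProbability

section Reception

variable {V : Type*} [Fintype V] [DecidableEq V] (G : SimpleGraph V) [DecidableRel G.Adj]
  {nA : ℕ} (p : ℝ) (γ : V → ℝ) {x w : V} {i : Fin nA}

/-- `x` receives on channel `i` from its neighbor `w` exactly when every vertex `v` takes an
action in `receiveFromCylinder G x w i v`, so by independence this event factorizes. -/
def receiveFromCylinder (x w : V) (i : Fin nA) (v : V) : Finset (Act nA) :=
  if v = x then {some (i, false)}
  else if v = w then {some (i, true)}
  else if G.Adj x v then univ.erase (some (i, true))
  else univ

open Classical in
theorem forall_mem_receiveFromCylinder_iff (hxw : G.Adj x w) (f : V → Act nA) :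
    (∀ v, f v ∈ receiveFromCylinder G x w i v) ↔
      listens f x i ∧ (G.neighborFinset x).filter (fun u => broadcasts f u i) = {w} := by
  have hwx : w ≠ x := hxw.ne'
  simp only [eq_singleton_iff_unique_mem, mem_filter, SimpleGraph.mem_neighborFinset]
  simp only [receiveFromCylinder, listens, broadcasts]
  constructor
  · intro h
    refine ⟨by simpa using h x, ⟨hxw, by simpa [hwx] using h w⟩, fun v ⟨hxv, hv⟩ => ?_⟩
    by_contra hvw
    simpa [hxv.ne', hvw, hxv, hv] using h v
  · rintro ⟨hx, ⟨-, hw⟩, huniq⟩ v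
    split_ifs with hvx hvw hxv
    · simpa [hvx] using hx
    · simpa [hvw] using hw
    · simpa using fun hv => hvw (huniq v ⟨hxv, hv⟩)
    · exact mem_univ _

theorem receivesOn_iff_exists_receiveFromCylinder (f : V → Act nA) :
    receivesOn G f x i ↔
      ∃ w ∈ G.neighborFinset x, ∀ v, f v ∈ receiveFromCylinder G x w i v := by
  classical
  constructor
  · rintro ⟨hl, hcard⟩
    obtain ⟨w, hw⟩ := card_eq_one.1 hcard
    have hwN : w ∈ G.neighborFinset x := (mem_filter.1 (hw ▸ mem_singleton_self w)).1
    exact ⟨w, hwN, (forall_mem_receiveFromCylinder_iff G ((G.mem_neighborFinset x w).1 hwN) f).2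
      ⟨hl, hw⟩⟩
  · rintro ⟨w, hwN, h⟩
    obtain ⟨hl, hw⟩ :=
      (forall_mem_receiveFromCylinder_iff G ((G.mem_neighborFinset x w).1 hwN) f).1 h
    exact ⟨hl, card_eq_one.2 ⟨w, hw⟩⟩

theorem prod_sum_receiveFromCylinder (hxw : G.Adj x w) :
    ∏ v, ∑ a ∈ receiveFromCylinder G x w i v, actProb nA p (γ v) a =
      actProb nA p (γ x) (some (i, false)) * (actProb nA p (γ w) (some (i, true)) *
        ∏ v ∈ (G.neighborFinset x).erase w, (1 - actProb nA p (γ v) (some (i, true)))) := by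
  have hxN : x ∉ G.neighborFinset x := G.notMem_neighborFinset_self x
  have hwN : w ∈ G.neighborFinset x := (G.mem_neighborFinset x w).2 hxw
  set c : V → ℝ := fun v => ∑ a ∈ receiveFromCylinder G x w i v, actProb nA p (γ v) a
  rw [← prod_subset (f := c) (subset_univ (insert x (G.neighborFinset x))), prod_insert hxN,
    ← mul_prod_erase _ c hwN]
  · simp only [c, receiveFromCylinder, ↓reduceIte, sum_singleton, if_neg hxw.ne']
    congr 2
    refine prod_congr rfl fun v hv => ?_
    obtain ⟨hvw, hxv⟩ : v ≠ w ∧ G.Adj x v := by simpa using hv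
    simp only [hxv.ne', hvw, hxv, if_false, if_true]
    rw [sum_erase_eq_sub (mem_univ _), sum_actProb]
  · intro v _ hv
    obtain ⟨hvx, hxv⟩ : v ≠ x ∧ ¬ G.Adj x v := by simpa using hv
    have hvw : v ≠ w := fun h => hxv (h ▸ hxw)
    simp only [c, receiveFromCylinder, hvx, hvw, hxv, if_false]
    exact sum_actProb p (γ v)

theorem Gam_eq_add_GamO : Gam G γ x = γ x + GamO G γ x :=
  sum_insert (G.notMem_neighborFinset_self x)

theorem roundPr_receivesOn :
    roundPr nA p γ (fun f => receivesOn G f x i) =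
      actProb nA p (γ x) (some (i, false)) * ∑ w ∈ G.neighborFinset x,
        actProb nA p (γ w) (some (i, true)) *
          ∏ v ∈ (G.neighborFinset x).erase w, (1 - actProb nA p (γ v) (some (i, true))) := by
  simp only [receivesOn_iff_exists_receiveFromCylinder]
  rw [roundPr_exists_mem, mul_sum]
  · refine sum_congr rfl fun w hw => ?_
    rw [roundPr_forall_mem, prod_sum_receiveFromCylinder G p γ ((G.mem_neighborFinset x w).1 hw)]
  · intro f w hw w' hw' h h'
    rw [forall_mem_receiveFromCylinder_iff G ((G.mem_neighborFinset x w).1 hw)] at h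
    rw [forall_mem_receiveFromCylinder_iff G ((G.mem_neighborFinset x w').1 hw')] at h'
    exact singleton_inj.1 (h.2.symm.trans h'.2)

end Reception

section Estimates

open Real

theorem prod_one_sub_le_exp_neg_sum {ι : Type*} (s : Finset ι) {q : ι → ℝ}
    (hq : ∀ i ∈ s, q i ≤ 1) : ∏ i ∈ s, (1 - q i) ≤ exp (-∑ i ∈ s, q i) := by
  rw [← sum_neg_distrib, exp_sum]
  exact prod_le_prod (fun i hi => sub_nonneg.2 (hq i hi)) fun i _ => one_sub_le_exp_neg _

theorem one_sub_mul_sum_mul_prod_erase_le {ι : Type*} [DecidableEq ι] (s : Finset ι) {q : ι → ℝ}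
    {a : ℝ} (hq0 : ∀ i ∈ s, 0 ≤ q i) (hqa : ∀ i ∈ s, q i ≤ a) (ha : a ≤ 1) :
    (1 - a) * ∑ w ∈ s, q w * ∏ v ∈ s.erase w, (1 - q v) ≤
      (∑ i ∈ s, q i) * exp (-∑ i ∈ s, q i) := by
  rw [mul_sum, sum_mul]
  refine sum_le_sum fun w hw => ?_
  have hP : 0 ≤ ∏ v ∈ s.erase w, (1 - q v) :=
    prod_nonneg fun v hv => sub_nonneg.2 ((hqa v (mem_of_mem_erase hv)).trans ha)
  calc (1 - a) * (q w * ∏ v ∈ s.erase w, (1 - q v))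
      ≤ q w * ((1 - q w) * ∏ v ∈ s.erase w, (1 - q v)) := by
        rw [mul_left_comm]
        gcongr
        · exact hq0 w hw
        · exact hqa w hw
    _ = q w * ∏ v ∈ s, (1 - q v) := by rw [mul_prod_erase s (fun v => 1 - q v) hw]
    _ ≤ q w * exp (-∑ i ∈ s, q i) :=
        mul_le_mul_of_nonneg_left (prod_one_sub_le_exp_neg_sum s fun v hv => (hqa v hv).trans ha)
          (hq0 w hw)

theorem pow_mul_exp_neg_le_factorial {x : ℝ} (hx : 0 ≤ x) (n : ℕ) :
    x ^ n * exp (-x) ≤ n.factorial := by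
  rw [exp_neg, ← div_eq_mul_inv, div_le_iff₀ (exp_pos x), ← div_le_iff₀' (by positivity)]
  exact pow_div_factorial_le_exp x hx n

theorem add_mul_mul_mul_exp_neg_le {a b x : ℝ} (ha : 0 ≤ a) (hb : 0 ≤ b) (hx : 0 ≤ x) :
    (a + b * x) * (x * exp (-x)) ≤ a + 2 * b := by
  have h1 := pow_mul_exp_neg_le_factorial hx 1
  have h2 := pow_mul_exp_neg_le_factorial hx 2
  norm_num at h1 h2
  nlinarith [mul_le_mul_of_nonneg_left h1 ha, mul_le_mul_of_nonneg_left h2 hb]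

theorem mul_sum_mul_prod_erase_le_six {ι : Type*} [DecidableEq ι] (s : Finset ι) {q : ι → ℝ}
    {T : ℝ} (hq0 : ∀ i ∈ s, 0 ≤ q i) (hq : ∀ i ∈ s, q i ≤ 1 / 4)
    (hT : T ≤ 1 / 4 + 2 * ∑ i ∈ s, q i) :
    T * ∑ w ∈ s, q w * ∏ v ∈ s.erase w, (1 - q v) ≤ 6 := by
  have hB0 : 0 ≤ ∑ w ∈ s, q w * ∏ v ∈ s.erase w, (1 - q v) :=
    sum_nonneg fun w hw => mul_nonneg (hq0 w hw)
      (prod_nonneg fun v hv => by linarith [hq v (mem_of_mem_erase hv)])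
  have hS0 : 0 ≤ ∑ i ∈ s, q i := sum_nonneg hq0
  have hBS := one_sub_mul_sum_mul_prod_erase_le s hq0 hq (by norm_num)
  have hpoly := add_mul_mul_mul_exp_neg_le (a := 1 / 4) (b := 2) (by norm_num) (by norm_num) hS0
  nlinarith [mul_le_mul_of_nonneg_right hT hB0,
    mul_le_mul_of_nonneg_left hBS (by positivity : (0 : ℝ) ≤ 1 / 4 + 2 * ∑ i ∈ s, q i)]

theorem two_zpow_neg_succ_le_half (k : ℕ) : (2 : ℝ) ^ (-((k : ℤ) + 1)) ≤ 1 / 2 := by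
  rw [one_div, ← zpow_neg_one]
  exact zpow_le_zpow_right₀ (by norm_num) (by omega)

end Estimates

/-- There is an absolute constant `c > 0` such that in the herald-protocol round model, for
every vertex `x` with `Γ(x) > 0` and every channel `i`, the probability that `x` receives a
message on channel `i` is at most `c · π_ℓ · γ(x) / Γ(x)`. -/
theorem stmt_11 : ∃ c : ℝ, 0 < c ∧
    ∀ (V : Type) [Fintype V] [DecidableEq V] (G : SimpleGraph V) [DecidableRel G.Adj]
      (nA : ℕ), 1 ≤ nA →
      ∀ pl : ℝ, 0 < pl → pl ≤ 1 / 2 →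
      ∀ γ : V → ℝ, (∀ y, 0 ≤ γ y ∧ γ y ≤ 1 / 2) →
      ∀ x : V, 0 < Gam G γ x →
      ∀ i : Fin nA,
      roundPr nA pl γ (fun f => receivesOn G f x i) ≤ c * pl * γ x / Gam G γ x := by
  refine ⟨6, by norm_num, fun V _ _ G _ nA _ pl hpl0 hpl γ hγ x hΓ i => ?_⟩
  rw [roundPr_receivesOn, le_div_iff₀ hΓ]
  simp only [actProb]
  set t : ℝ := 2 ^ (-((i.1 : ℤ) + 1))
  set N := G.neighborFinset x
  set q : V → ℝ := fun v => (1 - pl) * γ v * t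
  have ht0 : 0 < t := by positivity
  have ht : t ≤ 1 / 2 := two_zpow_neg_succ_le_half i
  have hq : ∀ v, 0 ≤ q v ∧ q v ≤ 1 / 4 := fun v => by
    have h0 : 0 ≤ (1 - pl) * γ v := mul_nonneg (by linarith) (hγ v).1
    have h1 : (1 - pl) * γ v ≤ 1 / 2 := by nlinarith [hγ v]
    exact ⟨mul_nonneg h0 ht0.le, by nlinarith⟩
  have htΓ : t * Gam G γ x ≤ 1 / 4 + 2 * ∑ v ∈ N, q v := by
    have hS : ∑ v ∈ N, q v = (1 - pl) * t * GamO G γ x := by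
      rw [GamO, mul_sum]; exact sum_congr rfl fun v _ => by ring
    have hΓo : 0 ≤ GamO G γ x := sum_nonneg fun v _ => (hγ v).1
    rw [Gam_eq_add_GamO, hS]
    nlinarith [hγ x, mul_nonneg ht0.le hΓo]
  have hγx : 0 ≤ γ x := (hγ x).1
  calc pl * γ x * t * (∑ w ∈ N, q w * ∏ v ∈ N.erase w, (1 - q v)) * Gam G γ x
      = pl * γ x * (t * Gam G γ x * ∑ w ∈ N, q w * ∏ v ∈ N.erase w, (1 - q v)) := by ring
    _ ≤ pl * γ x * 6 := by
        gcongr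
        exact mul_sum_mul_prod_erase_le_six N (fun v _ => (hq v).1) (fun v _ => (hq v).2) htΓ
    _ = 6 * pl * γ x := by ring
end
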